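/- Two-iteration convergence for two aligned 1D subdomains: let Ω₁ = (a,c), Ω₂ = (c,b), V > 0, and Δt ≤ min(c-a, b-c)/V. With iterates defined by f_i^p solving the transport equation on Ω_i with inflow boundary data taken from f_{i-1}^{p-1} (and exact data at x = a), the second iterate f₂² equals the exact solution F(x - Vt) on Ω₂ × [0, Δt]. -/
import Mathlib


theorem two_subdomain_two_iterations (a c b V Δt : ℝ)
    (hac : a < c) (hcb : c < b) (hV : 0 < V) (hΔt : 0 < Δt)
    (hCFL : Δt ≤ min (c - a) (b - c) / V)
    (F : ℝ → ℝ) -- global initial profile, exact solution is F (x - V t)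
    (g : ℝ → ℝ) -- exact external data at x = a
    (hg : ∀ s, g s = F (a - V * s))
    (f₁ f₂ : ℕ → ℝ → ℝ → ℝ)
    (hf₁0 : ∀ x t, f₁ 0 x t = F x) -- time-independent initialization
    (hf₂0 : ∀ x t, f₂ 0 x t = F x)
    -- iterates on Ω₁ = (a,c): inflow at x = a supplied with exact external data
    (hf₁ : ∀ p x t, f₁ (p + 1) x t =
      if a ≤ x - V * t then F (x - V * t) else g (t - (x - a) / V))
    -- iterates on Ω₂ = (c,b): inflow at x = c supplied by the previous iterate on Ω₁
    (hf₂ : ∀ p x t, f₂ (p + 1) x t =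
      if c ≤ x - V * t then F (x - V * t) else f₁ p c (t - (x - c) / V)) :
    ∀ x t, c ≤ x → x ≤ b → 0 ≤ t → t ≤ Δt → f₂ 2 x t = F (x - V * t) := by
  intro x t hcx hxb ht htΔ
  have hVt : V * t ≤ c - a := by
    have h1 : Δt ≤ (c - a) / V := le_trans hCFL (by gcongr; exact min_le_left _ _)
    have := mul_le_mul_of_nonneg_left (le_trans htΔ h1) hV.le
    rwa [mul_div_cancel₀ _ hV.ne'] at this
  have hax : a ≤ x - V * t := by linarith
  rw [show (2:ℕ) = 1 + 1 from rfl, hf₂]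
  by_cases h : c ≤ x - V * t
  · rw [if_pos h]
  · have key : c - V * (t - (x - c) / V) = x - V * t := by field_simp; ring
    rw [if_neg h, hf₁, if_pos (by rw [key]; linarith), key]
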